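/- arXiv:0808.1929 — 2 statements merged into one kernel-verified Lean document; each statement's English description precedes it below -/
import Mathlib

section
/- Let R = ⊕_{m∈ℕ} R_m be a graded ring which is an integral domain, finitely generated as an algebra over R_0, and let d be a positive integer. Then the d-th Veronese subring R_{(d)} = ⊕_{m∈ℕ} R_{dm} is a finitely generated R_0-algebra. -/
/-- Lemma 3.5 (1st half): if an ℕ-graded integral domain `R` (graded over its degree
zero part, identified with the base ring `A`) is a finitely generated `A`-algebra,
then for any positive integer `d` the `d`-th Veronese subring
`R_{(d)} = ⊕_m R_{dm}` (the subalgebra generated by the pieces of degree divisible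
by `d`) is a finitely generated `A`-algebra. -/
theorem veronese_fg_of_fg (A R : Type*) [CommRing A] [CommRing R] [IsDomain R]
    [Algebra A R] (𝒜 : ℕ → Submodule A R) [GradedAlgebra 𝒜]
    (h0 : (𝒜 0 : Set R) ⊆ Set.range (algebraMap A R))
    (hfg : (⊤ : Subalgebra A R).FG) (d : ℕ) (hd : 0 < d) :
    (Algebra.adjoin A (⋃ m : ℕ, (𝒜 (d * m) : Set R))).FG := by
  classical
  -- a degree function for homogeneous elements
  set deg : R → ℕ := fun t => if h : ∃ n, t ∈ 𝒜 n then h.choose else 0 with hdeg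
  have hdegspec : ∀ t : R, (∃ n, t ∈ 𝒜 n) → t ∈ 𝒜 (deg t) := by
    intro t h
    show t ∈ 𝒜 (if h : ∃ n, t ∈ 𝒜 n then h.choose else 0)
    rw [dif_pos h]
    exact h.choose_spec
  -- Step 1: a finite set of homogeneous generators
  obtain ⟨s, hs⟩ := hfg
  set T : Finset R := s.biUnion (fun x =>
      (DirectSum.decompose 𝒜 x).support.image
        (fun n => (DirectSum.decompose 𝒜 x n : R))) with hT
  have hThomex : ∀ t ∈ T, ∃ n, t ∈ 𝒜 n := by
    intro t ht
    rw [hT, Finset.mem_biUnion] at ht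
    obtain ⟨x, -, ht⟩ := ht
    rw [Finset.mem_image] at ht
    obtain ⟨n, -, rfl⟩ := ht
    exact ⟨n, SetLike.coe_mem _⟩
  have hThom : ∀ t ∈ T, t ∈ 𝒜 (deg t) := fun t ht => hdegspec t (hThomex t ht)
  have hTtop : Algebra.adjoin A (T : Set R) = ⊤ := by
    rw [eq_top_iff, ← hs]
    apply Algebra.adjoin_le
    intro x hx
    rw [← DirectSum.sum_support_decompose 𝒜 x]
    refine Subalgebra.sum_mem _ (fun n hn => Algebra.subset_adjoin ?_)
    rw [hT]
    simp only [Finset.coe_biUnion, Set.mem_iUnion, Finset.mem_coe]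
    exact ⟨x, hx, Finset.mem_image.mpr ⟨n, hn, rfl⟩⟩
  -- the bound and the candidate finite generating set
  set N : ℕ := d * T.card with hN
  set G : Finset R := Finset.image
      (fun a : {x // x ∈ T} → Fin (N + 1) => ∏ t ∈ T.attach, (t : R) ^ ((a t : ℕ)))
      (Finset.univ.filter
        (fun a : {x // x ∈ T} → Fin (N + 1) =>
          d ∣ ∑ t ∈ T.attach, (a t : ℕ) * deg (t : R))) with hG
  -- small monomials with degree divisible by d lie in G
  have hbase : ∀ m : Multiset R, (∀ x ∈ m, x ∈ T) → Multiset.card m ≤ N →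
      d ∣ (m.map deg).sum → m.prod ∈ G := by
    intro m hm hcard hdvd
    have hsub : m.toFinset ⊆ T := fun x hx => hm x (Multiset.mem_toFinset.mp hx)
    have hcount0 : ∀ x ∈ T, x ∉ m.toFinset → m.count x = 0 := by
      intro x _ hx
      exact Multiset.count_eq_zero_of_notMem (fun h => hx (Multiset.mem_toFinset.mpr h))
    have hprod : m.prod = ∏ t ∈ T.attach, (t : R) ^ (m.count (t : R)) := by
      rw [Finset.prod_multiset_count_of_subset m T hsub, ← Finset.prod_attach]
    have hsum : (m.map deg).sum = ∑ t ∈ T.attach, m.count (t : R) * deg (t : R) := by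
      rw [Finset.sum_multiset_map_count]
      rw [Finset.sum_subset hsub (fun x hx1 hx2 => by rw [hcount0 x hx1 hx2, zero_smul])]
      rw [← Finset.sum_attach T (fun t => m.count t • deg t)]
      simp [smul_eq_mul]
    set a : {x // x ∈ T} → Fin (N + 1) := fun t =>
      ⟨m.count (t : R), Nat.lt_succ_of_le (le_trans (Multiset.count_le_card _ _) hcard)⟩ with ha
    rw [hG]
    refine Finset.mem_image.mpr ⟨a, ?_, ?_⟩
    · rw [Finset.mem_filter]
      refine ⟨Finset.mem_univ _, ?_⟩
      have : ∑ t ∈ T.attach, ((a t : ℕ)) * deg (t : R)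
          = ∑ t ∈ T.attach, m.count (t : R) * deg (t : R) := rfl
      rw [this, ← hsum]
      exact hdvd
    · rw [← hprod]
  -- every monomial in T with degree divisible by d lies in adjoin A G
  have hmain : ∀ n : ℕ, ∀ m : Multiset R, Multiset.card m = n → (∀ x ∈ m, x ∈ T) →
      d ∣ (m.map deg).sum → m.prod ∈ Algebra.adjoin A (G : Set R) := by
    intro n
    induction n using Nat.strong_induction_on with
    | _ n ih =>
      intro m hcard hm hdvd
      by_cases hle : Multiset.card m ≤ N
      · exact Algebra.subset_adjoin (hbase m hm hle hdvd)
      · push_neg at hle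
        -- pigeonhole: some t ∈ T occurs at least d times in m
        have hcount : ∃ t ∈ T, d ≤ m.count t := by
          by_contra hc
          push_neg at hc
          have h1 : ∑ t ∈ T, m.count t = Multiset.card m := by
            have hsub : m.toFinset ⊆ T := fun x hx => hm x (Multiset.mem_toFinset.mp hx)
            rw [← Multiset.toFinset_sum_count_eq m]
            exact (Finset.sum_subset hsub (fun x _ hx =>
              Multiset.count_eq_zero_of_notMem
                (fun h => hx (Multiset.mem_toFinset.mpr h)))).symm
          have h2 : ∑ t ∈ T, m.count t ≤ ∑ _t ∈ T, (d - 1) :=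
            Finset.sum_le_sum (fun t ht => Nat.le_sub_one_of_lt (hc t ht))
          rw [h1, Finset.sum_const, smul_eq_mul, mul_comm] at h2
          have h3 : (d - 1) * T.card ≤ d * T.card := Nat.mul_le_mul_right _ (Nat.sub_le d 1)
          rw [hN] at hle
          omega
        obtain ⟨t, htT, htc⟩ := hcount
        have hle' : Multiset.replicate d t ≤ m := by
          rw [Multiset.le_iff_count]
          intro x
          rw [Multiset.count_replicate]
          split
          · next h => subst h; exact htc
          · exact Nat.zero_le _
        obtain ⟨m', hm'⟩ : ∃ m', m = Multiset.replicate d t + m' :=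
          ⟨m - Multiset.replicate d t, by rw [add_comm]; exact (tsub_add_cancel_of_le hle').symm⟩
        subst hm'
        rw [Multiset.prod_add, Multiset.prod_replicate]
        have hds : ((Multiset.replicate d t + m').map deg).sum
            = d * deg t + (m'.map deg).sum := by
          rw [Multiset.map_add, Multiset.sum_add, Multiset.map_replicate,
            Multiset.sum_replicate, smul_eq_mul]
        have hdvd' : d ∣ (m'.map deg).sum := by
          rw [hds] at hdvd
          exact (Nat.dvd_add_right (Dvd.intro _ rfl)).mp hdvd
        have hcard' : Multiset.card m' < n := by
          rw [← hcard, Multiset.card_add, Multiset.card_replicate]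
          omega
        have ht' : t ^ d ∈ G := by
          have hb := hbase (Multiset.replicate d t)
            (fun x hx => by rwa [Multiset.eq_of_mem_replicate hx])
            (by
              rw [Multiset.card_replicate, hN]
              exact Nat.le_mul_of_pos_right d (Finset.card_pos.mpr ⟨t, htT⟩))
            (by
              rw [Multiset.map_replicate, Multiset.sum_replicate, smul_eq_mul]
              exact Dvd.intro _ rfl)
          rwa [Multiset.prod_replicate] at hb
        exact mul_mem (Algebra.subset_adjoin ht')
          (ih _ hcard' m' rfl (fun x hx => hm x (Multiset.mem_add.mpr (Or.inr hx))) hdvd')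
  -- products of elements of T are homogeneous
  have hommul : ∀ m : Multiset R, (∀ x ∈ m, x ∈ T) → m.prod ∈ 𝒜 ((m.map deg).sum) := by
    intro m
    induction m using Multiset.induction_on with
    | empty => intro _; simpa using SetLike.one_mem_graded 𝒜
    | cons a m ih =>
      intro h
      rw [Multiset.prod_cons, Multiset.map_cons, Multiset.sum_cons]
      exact SetLike.mul_mem_graded (hThom a (h a (Multiset.mem_cons_self a m)))
        (ih (fun x hx => h x (Multiset.mem_cons_of_mem hx)))
  -- conclusion
  refine ⟨G, le_antisymm ?_ ?_⟩
  · -- adjoin G ≤ adjoin (⋃ ...)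
    apply Algebra.adjoin_le
    intro x hx
    apply Algebra.subset_adjoin
    rw [Finset.mem_coe, hG, Finset.mem_image] at hx
    obtain ⟨a, hafil, rfl⟩ := hx
    rw [Finset.mem_filter] at hafil
    obtain ⟨m0, hm0⟩ := hafil.2
    rw [Set.mem_iUnion]
    refine ⟨m0, ?_⟩
    have hmem := SetLike.prod_pow_mem_graded 𝒜 (fun t : {x // x ∈ T} => deg (t : R))
      (fun t : {x // x ∈ T} => (t : R)) (F := T.attach)
      (fun t : {x // x ∈ T} => (a t : ℕ))
      (fun k _ => hThom (k : R) k.2)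
    rw [show ∑ t ∈ T.attach, (a t : ℕ) • deg (t : R) = d * m0 by
      simpa [smul_eq_mul] using hm0] at hmem
    exact hmem
  · -- adjoin (⋃ ...) ≤ adjoin G
    apply Algebra.adjoin_le
    intro x hx
    rw [Set.mem_iUnion] at hx
    obtain ⟨m, hxm⟩ := hx
    have hxT : x ∈ Subalgebra.toSubmodule (Algebra.adjoin A (T : Set R)) := by
      rw [hTtop]; trivial
    rw [Algebra.adjoin_eq_span] at hxT
    have key : ∀ y ∈ Submodule.span A ((Submonoid.closure (T : Set R) : Submonoid R) : Set R),
        (DirectSum.decompose 𝒜 y (d * m) : R) ∈ Algebra.adjoin A (G : Set R) := by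
      intro y hy
      induction hy using Submodule.span_induction with
      | mem z hz =>
        obtain ⟨m0, hm0T, rfl⟩ := Submonoid.exists_multiset_of_mem_closure hz
        have hzh := hommul m0 hm0T
        by_cases hn : (m0.map deg).sum = d * m
        · rw [hn] at hzh
          rw [DirectSum.decompose_of_mem_same 𝒜 hzh]
          exact hmain _ m0 rfl hm0T (hn ▸ Dvd.intro m rfl)
        · rw [DirectSum.decompose_of_mem_ne 𝒜 hzh hn]
          exact Subalgebra.zero_mem _
      | zero =>
        rw [DirectSum.decompose_zero]
        simpa using Subalgebra.zero_mem _
      | add u v hu hv ihu ihv =>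
        rw [DirectSum.decompose_add, DirectSum.add_apply, Submodule.coe_add]
        exact add_mem ihu ihv
      | smul r u hu ihu =>
        rw [DirectSum.decompose_smul]
        exact Subalgebra.smul_mem _ ihu r
    have := key x hxT
    rwa [DirectSum.decompose_of_mem_same 𝒜 hxm] at this
end

section
/- Let W be an affine subspace of ℝ^n defined over ℚ (i.e. cut out by finitely many linear equations with rational coefficients) and let θ ∈ W be a point whose smallest containing rational affine subspace is W itself. Suppose θ has at least one irrational coordinate, say coordinate j. Then for every η > 0 and every positive integer r, there exist a point φ ∈ W with all coordinates rational and a positive integer k such that kφ/r ∈ ℤ^n (i.e. all coordinates of kφ/r are integers), ‖φ − θ‖_∞ < η, and φ_j > θ_j. -/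
/-!
Let `M` be the `ℚ`-span of `1` and the coordinates of `θ`, and choose a `ℚ`-basis of `M`
containing `1` and the irrational `θ j`. A `ℚ`-linear map `f : M → ℝ` with `f 1 = 1` sends `θ`
to the point `(f (θ i))ᵢ`, which satisfies every rational affine relation satisfied by `θ`, hence
lies in `W`. Such maps are parametrized by their values `t` on the basis; the basis itself gives
back `θ`, the `j`-th coordinate of the image is the value of `t` at `θ j`, and the image depends
continuously on `t`. By density of `ℚ` one can take `t` rational, `1` at `1`, close to the basis
and strictly larger at `θ j`; clearing denominators then gives `k`.
-/

open Set Submodule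

lemma Irrational.linearIndepOn_pair_one {M : Submodule ℚ ℝ} {e x : M} (he : (e : ℝ) = 1)
    (hx : Irrational x) : LinearIndepOn ℚ id {e, x} := by
  refine (linearIndepOn_pair_iff _ ?_ ?_).2 fun c hc => hx ⟨c, ?_⟩
  · rintro rfl
    exact hx ⟨1, by simp [he]⟩
  · rintro rfl
    simp at he
  · simpa [Rat.smul_def, he] using congrArg Subtype.val hc

lemma Submodule.exists_basis_one_irrational {M : Submodule ℚ ℝ} (h1 : (1 : ℝ) ∈ M) {x : ℝ}
    (hxM : x ∈ M) (hx : Irrational x) :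
    ∃ (κ : Type) (b : Module.Basis κ ℚ M) (i₀ i₁ : κ), (b i₀ : ℝ) = 1 ∧ (b i₁ : ℝ) = x := by
  have hli := Irrational.linearIndepOn_pair_one (e := ⟨1, h1⟩) (x := ⟨x, hxM⟩) rfl hx
  have hsub := hli.subset_extend (subset_univ _)
  exact ⟨_, .extend hli, ⟨_, hsub (mem_insert _ _)⟩, ⟨_, hsub (mem_insert_of_mem _ rfl)⟩,
    by simp [Module.Basis.extend_apply_self], by simp [Module.Basis.extend_apply_self]⟩

lemma LinearMap.sum_mul_eq_of_sum_mul_eq {ι : Type*} [Fintype ι] {M : Submodule ℚ ℝ}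
    (f : M →ₗ[ℚ] ℝ) {e : M} (he : (e : ℝ) = 1) (hfe : f e = 1) (x : ι → M) (a : ι → ℚ) (c : ℚ)
    (h : ∑ i, (a i : ℝ) * x i = c) : ∑ i, (a i : ℝ) * f (x i) = c := by
  have hM : ∑ i, a i • x i = c • e := by
    apply Subtype.ext
    simpa [Rat.smul_def, he] using h
  simpa [Rat.smul_def, hfe] using congrArg f hM

namespace Module.Basis

variable {κ : Type*} [Fintype κ]

lemma continuous_constr_apply {R M E S : Type*} [Semiring R] [AddCommMonoid M] [Module R M]
    [AddCommMonoid E] [Module R E] [TopologicalSpace E] [ContinuousAdd E]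
    [ContinuousConstSMul R E] [Semiring S] [Module S E] [SMulCommClass R S E]
    (b : Basis κ R M) (x : M) : Continuous fun t : κ → E => b.constr S t x := by
  simp only [constr_apply_fintype]
  fun_prop

lemma constr_ratCast_apply {M K : Type*} [AddCommGroup M] [Module ℚ M] [DivisionRing K]
    [CharZero K] (b : Basis κ ℚ M) (q : κ → ℚ) (x : M) :
    b.constr ℚ (fun m => (q m : K)) x = b.constr ℚ q x := by
  simp [Rat.smul_def]

end Module.Basis

lemma Continuous.exists_rat_apply_mem {κ X : Type*} [TopologicalSpace X] {F : (κ → ℝ) → X}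
    (hF : Continuous F) {U : Set X} (hU : IsOpen U) {β : κ → ℝ} (hβU : F β ∈ U) {i₀ i₁ : κ}
    (h : i₀ ≠ i₁) {a : ℚ} (ha : β i₀ = a) :
    ∃ q : κ → ℚ, q i₀ = a ∧ F (fun m => q m) ∈ U ∧ β i₁ < q i₁ := by
  classical
  -- precomposing with `update · i₀ a` removes the closed constraint `t i₀ = a`
  set G : (κ → ℝ) → X := fun t => F (Function.update t i₀ a)
  have hGU : IsOpen (G ⁻¹' U) := hU.preimage (hF.comp (by fun_prop))
  have hV : IsOpen {t : κ → ℝ | β i₁ < t i₁} := isOpen_lt continuous_const (continuous_apply i₁)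
  have hβV : β ∈ closure {t : κ → ℝ | β i₁ < t i₁} := by
    change β ∈ closure (Function.eval i₁ ⁻¹' Ioi (β i₁))
    rw [← (isOpenMap_eval (X := fun _ : κ => ℝ) i₁).preimage_closure_eq_closure_preimage
      (continuous_apply i₁), closure_Ioi]
    exact le_refl (β i₁)
  have hβG : β ∈ G ⁻¹' U := by simpa [G, ← ha] using hβU
  obtain ⟨q, hqG, hqV⟩ := (DenseRange.piMap fun _ => Rat.denseRange_cast).exists_mem_open
    (hGU.inter hV) (mem_closure_iff.1 hβV _ hGU hβG)
  refine ⟨Function.update q i₀ a, by simp, ?_, by simpa [Function.update_of_ne h.symm] using hqV⟩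
  have hcast : (fun m => ((Function.update q i₀ a m : ℚ) : ℝ)) =
      Function.update (Pi.map (fun _ => Rat.cast) q) i₀ a := Function.comp_update _ _ _ _
  rwa [hcast]

lemma exists_nat_mul_div_eq_int {ι : Type*} [Fintype ι] (ρ : ι → ℚ) {r : ℕ} (hr : 0 < r) :
    ∃ k : ℕ, 0 < k ∧ ∀ i, ∃ z : ℤ, (k : ℝ) * ρ i / r = z := by
  refine ⟨r * ∏ i, (ρ i).den, Nat.mul_pos hr (Finset.prod_pos fun i _ => (ρ i).pos), fun i => ?_⟩
  obtain ⟨e, he⟩ := Finset.dvd_prod_of_mem (fun i => (ρ i).den) (Finset.mem_univ i)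
  refine ⟨(ρ i).num * e, ?_⟩
  have hr' : (r : ℝ) ≠ 0 := by positivity
  have hnum : ((ρ i).den : ℝ) * ρ i = (ρ i).num := by exact_mod_cast Rat.den_mul_eq_num (ρ i)
  rw [he]
  push_cast
  field_simp
  linear_combination (e : ℝ) * hnum

theorem diophantine_approximation_step_general (n : ℕ)
    (s : Finset ((Fin n → ℚ) × ℚ)) (W : Set (Fin n → ℝ))
    (hW : W = {x | ∀ p ∈ s, ∑ i, (p.1 i : ℝ) * x i = (p.2 : ℝ)})
    (θ : Fin n → ℝ) (hθ : θ ∈ W)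
    (j : Fin n) (hirr : Irrational (θ j))
    (η : ℝ) (hη : 0 < η) (r : ℕ) (hr : 0 < r) :
    ∃ (φ : Fin n → ℝ) (k : ℕ), 0 < k ∧ φ ∈ W ∧
      (∀ i, ∃ q : ℚ, φ i = (q : ℝ)) ∧
      (∀ i, ∃ z : ℤ, (k : ℝ) * φ i / (r : ℝ) = (z : ℝ)) ∧
      (∀ i, |φ i - θ i| < η) ∧
      θ j < φ j := by
  set M : Submodule ℚ ℝ := span ℚ (insert 1 (range θ))
  have h1 : (1 : ℝ) ∈ M := subset_span (mem_insert _ _)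
  have hθM : ∀ i, θ i ∈ M := fun i => subset_span (mem_insert_of_mem _ ⟨i, rfl⟩)
  have : FiniteDimensional ℚ M := .span_of_finite ℚ ((finite_range θ).insert 1)
  obtain ⟨κ, b, i₀, i₁, hb₀, hb₁⟩ := M.exists_basis_one_irrational h1 (hθM j) hirr
  have := FiniteDimensional.fintypeBasisIndex b
  have hi : i₀ ≠ i₁ := fun h => hirr ⟨1, by simp [← hb₁, ← h, hb₀]⟩
  let φ : (κ → ℝ) → Fin n → ℝ := fun t i => b.constr ℚ t ⟨θ i, hθM i⟩
  have hφθ : φ (fun m => b m) = θ := funext fun i =>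
    congrArg (· ⟨θ i, hθM i⟩) (b.constr_self ℚ M.subtype)
  have hφj : ∀ t, φ t j = t i₁ := fun t => by
    simp only [φ, show (⟨θ j, hθM j⟩ : M) = b i₁ from Subtype.ext hb₁.symm, b.constr_basis]
  have hφc : Continuous φ := continuous_pi fun i => b.continuous_constr_apply _
  have hθη : φ (fun m => b m) ∈ Metric.ball θ η := by simpa [hφθ] using hη
  obtain ⟨q, hq₀, hqη, hqj⟩ :=
    hφc.exists_rat_apply_mem Metric.isOpen_ball hθη hi (a := 1) (by simpa using hb₀)
  have hφq : ∀ i, φ (fun m => q m) i = b.constr ℚ q ⟨θ i, hθM i⟩ := fun i =>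
    b.constr_ratCast_apply q _
  obtain ⟨k, hk, hkz⟩ := exists_nat_mul_div_eq_int (fun i => b.constr ℚ q ⟨θ i, hθM i⟩) hr
  refine ⟨φ (fun m => q m), k, hk, ?_, fun i => ⟨_, hφq i⟩, fun i => hφq i ▸ hkz i,
    fun i => ?_, ?_⟩
  · rw [hW] at hθ ⊢
    exact fun p hp => (b.constr ℚ _).sum_mul_eq_of_sum_mul_eq hb₀
      (by rw [b.constr_basis, hq₀, Rat.cast_one]) _ _ _ (hθ p hp)
  · simpa [hφθ, Real.dist_eq] using (dist_pi_lt_iff hη).1 hqη i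
  · simpa [hφj, ← hb₁] using hqj

/-- Diophantine approximation step of Theorem 7.1: let `W ⊆ ℝ^n` be an affine
subspace cut out by finitely many linear equations with rational coefficients, and
let `θ ∈ W` be a point whose smallest containing rational affine subspace is `W`
itself (every rational affine equation satisfied by `θ` holds on all of `W`).
Suppose the coordinate `θ_j` is irrational.  Then for every `η > 0` and every
positive integer `r` there are a rational point `φ ∈ W` and a positive integer `k`
with `kφ/r` integral, `‖φ − θ‖_∞ < η` and `φ_j > θ_j`. -/
theorem diophantine_approximation_step (n : ℕ)
    (s : Finset ((Fin n → ℚ) × ℚ)) (W : Set (Fin n → ℝ))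
    (hW : W = {x | ∀ p ∈ s, ∑ i, (p.1 i : ℝ) * x i = (p.2 : ℝ)})
    (θ : Fin n → ℝ) (hθ : θ ∈ W)
    (hmin : ∀ (a : Fin n → ℚ) (c : ℚ), (∑ i, (a i : ℝ) * θ i = (c : ℝ)) →
      ∀ x ∈ W, ∑ i, (a i : ℝ) * x i = (c : ℝ))
    (j : Fin n) (hirr : Irrational (θ j))
    (η : ℝ) (hη : 0 < η) (r : ℕ) (hr : 0 < r) :
    ∃ (φ : Fin n → ℝ) (k : ℕ), 0 < k ∧ φ ∈ W ∧
      (∀ i, ∃ q : ℚ, φ i = (q : ℝ)) ∧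
      (∀ i, ∃ z : ℤ, (k : ℝ) * φ i / (r : ℝ) = (z : ℝ)) ∧
      (∀ i, |φ i - θ i| < η) ∧
      θ j < φ j :=
  diophantine_approximation_step_general n s W hW θ hθ j hirr η hη r hr
end
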